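/- If $n$ is odd, then $K_n$ admits a topological embedding into $\mathbb{R}^{n+1}$. -/

import Mathlib

noncomputable section

/-- Complex conjugation on the unit circle. -/
def Circle.conj (z : Circle) : Circle :=
  ⟨starRingEnd ℂ z, by
    have := z.2
    simp only [Submonoid.unitSphere, Submonoid.mem_mk, Subsemigroup.mem_mk] at *
    simp_all [mem_sphere_zero_iff_norm]⟩

/-- Negation on the unit circle. -/
def Circle.neg (z : Circle) : Circle :=
  ⟨-(z : ℂ), by
    have := z.2
    simp only [Submonoid.unitSphere, Submonoid.mem_mk, Subsemigroup.mem_mk] at *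
    simp_all [mem_sphere_zero_iff_norm]⟩

/-- The torus `(S¹)ⁿ`. -/
abbrev Torus (n : ℕ) : Type := Fin n → Circle

/-- The involution `(z₁,…,z_{n-1},z_n) ↦ (z̄₁,…,z̄_{n-1},-z_n)` on the torus. -/
def kleinInvolution (n : ℕ) (z : Torus n) : Torus n :=
  fun i => if (i : ℕ) + 1 = n then (z i).neg else (z i).conj

/-- The identification defining the `n`-dimensional Klein bottle. -/
def KleinRel (n : ℕ) (z w : Torus n) : Prop := w = kleinInvolution n z

/-- The `n`-dimensional Klein bottle `Kₙ = (S¹)ⁿ/((z,z_n) ∼ (z̄,-z_n))`. -/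
def Klein (n : ℕ) : Type := Quot (KleinRel n)

instance (n : ℕ) : TopologicalSpace (Klein n) := instTopologicalSpaceQuot

/-! For odd `n = 2m + 1`, embed `T²ᵐ` into `ℝ × ℂᵐ` by iterated tubes, so that conjugation fixes
the first coordinate `ρ > 0` and negates the second one `v`. The map
`(x, w) ↦ (ρ(x) w², w v(x)) ∈ ℂ × ℂᵐ ≅ ℝⁿ⁺¹` is invariant under `(x, w) ↦ (x̄, -w)`. Conversely
`ρ w²` determines `ρ` and `w` up to sign, after which `w v` determines `v`, so the map is injective
modulo the Klein involution; by compactness it induces an embedding of `Kₙ`. -/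

open Function Topology

lemma Circle.coe_conj (z : Circle) : (z.conj : ℂ) = starRingEnd ℂ z := rfl

lemma Circle.neg_eq (z : Circle) : z.neg = -z := rfl

lemma Complex.eq_of_ofReal_mul_eq {r r' : ℝ} {u u' : ℂ} (hr : 0 < r) (hr' : 0 < r')
    (hu : ‖u‖ = 1) (hu' : ‖u'‖ = 1) (h : (r : ℂ) * u = r' * u') : r = r' ∧ u = u' := by
  have hrr : r = r' := by
    simpa [hu, hu', abs_of_pos hr, abs_of_pos hr'] using congrArg norm h
  subst hrr
  exact ⟨rfl, mul_left_cancel₀ (Complex.ofReal_ne_zero.2 hr.ne') h⟩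

lemma Fin.eq_of_init_eq_of_last_eq {α : Type*} {k : ℕ} {z z' : Fin (k + 1) → α}
    (hinit : Fin.init z = Fin.init z') (hlast : z (Fin.last k) = z' (Fin.last k)) : z = z' := by
  rw [← Fin.snoc_init_self z, ← Fin.snoc_init_self z', hinit, hlast]

/-- Revolving the image of `Tᵏ`, which lies in the half-space `ρ > 0`, about the hyperplane
`ρ = 0` embeds `Tᵏ⁺¹`; the shift by `2 ^ (k + 1)` puts the result back into that half-space. -/
def torusTube : (k : ℕ) → Torus k → ℝ × (Fin k → ℝ)
  | 0, _ => (1, 0)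
  | k + 1, z =>
    let p : ℂ := ((torusTube k (Fin.tail z)).1 : ℂ) * z 0
    (2 ^ (k + 1) + p.re, Fin.cons p.im (torusTube k (Fin.tail z)).2)

lemma torusTube_fst_mem (k : ℕ) (z : Torus k) : (torusTube k z).1 ∈ Set.Ioo 0 (2 ^ (k + 1)) := by
  induction k with
  | zero => simp [torusTube]
  | succ k ih =>
    obtain ⟨hpos, hlt⟩ := ih (Fin.tail z)
    have hre := Complex.abs_re_le_norm (((torusTube k (Fin.tail z)).1 : ℂ) * z 0)
    rw [norm_mul, Circle.norm_coe, Complex.norm_real, Real.norm_of_nonneg hpos.le, mul_one]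
      at hre
    constructor <;> simp only [torusTube] <;> linarith [abs_le.1 hre, pow_succ (2 : ℝ) (k + 1)]

lemma torusTube_conj (k : ℕ) (z : Torus k) :
    torusTube k (fun i => (z i).conj) = ((torusTube k z).1, -(torusTube k z).2) := by
  induction k with
  | zero => simp [torusTube]
  | succ k ih =>
    have htail : Fin.tail (fun i => (z i).conj) = fun i => (Fin.tail z i).conj := rfl
    simp only [torusTube, htail, ih, Circle.coe_conj]
    refine Prod.ext (by simp) (funext fun i => Fin.cases ?_ (fun j => ?_) i) <;> simp

lemma torusTube_injective (k : ℕ) : Injective (torusTube k) := by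
  induction k with
  | zero => exact fun _ _ _ => Subsingleton.elim _ _
  | succ k ih =>
    intro z z' h
    simp only [torusTube, Prod.mk.injEq, add_right_inj, Fin.cons_inj] at h
    obtain ⟨hre, him, hsnd⟩ := h
    obtain ⟨hfst, h0⟩ := Complex.eq_of_ofReal_mul_eq (torusTube_fst_mem k _).1
      (torusTube_fst_mem k _).1 (Circle.norm_coe _) (Circle.norm_coe _) (Complex.ext hre him)
    rw [← Fin.cons_self_tail z, ← Fin.cons_self_tail z', Circle.coe_inj.1 h0,
      ih (Prod.ext hfst hsnd)]

lemma continuous_torusTube (k : ℕ) : Continuous (torusTube k) := by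
  induction k with
  | zero => exact continuous_const
  | succ k ih =>
    have htail : Continuous fun z : Torus (k + 1) => Fin.tail z :=
      continuous_pi fun i => continuous_apply i.succ
    have hp : Continuous fun z : Torus (k + 1) => ((torusTube k (Fin.tail z)).1 : ℂ) * z 0 := by
      have := ih.comp htail
      fun_prop
    exact (continuous_const.add (Complex.continuous_re.comp hp)).prodMk
      ((Complex.continuous_im.comp hp).finCons (continuous_snd.comp (ih.comp htail)))

lemma init_kleinInvolution (k : ℕ) (z : Torus (k + 1)) :
    Fin.init (kleinInvolution (k + 1) z) = fun i => (Fin.init z i).conj := by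
  funext i
  simp [Fin.init, kleinInvolution, i.isLt.ne]

lemma kleinInvolution_last (k : ℕ) (z : Torus (k + 1)) :
    kleinInvolution (k + 1) z (Fin.last k) = -z (Fin.last k) := by
  simp [kleinInvolution, Circle.neg_eq]

section KleinMap

variable {k : ℕ} {V : Type*} [AddCommGroup V] [Module ℂ V] (e : Torus k → ℝ × V)

def kleinMap (z : Torus (k + 1)) : ℂ × V :=
  (((e (Fin.init z)).1 : ℂ) * (z (Fin.last k) : ℂ) ^ 2, (z (Fin.last k) : ℂ) • (e (Fin.init z)).2)

variable {e}

lemma kleinMap_kleinInvolution (he : ∀ x, e (fun i => (x i).conj) = ((e x).1, -(e x).2))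
    (z : Torus (k + 1)) : kleinMap e (kleinInvolution (k + 1) z) = kleinMap e z := by
  simp [kleinMap, init_kleinInvolution, kleinInvolution_last, he]

lemma kleinMap_eq_kleinMap (he : ∀ x, e (fun i => (x i).conj) = ((e x).1, -(e x).2))
    (he_inj : Injective e) (he_pos : ∀ x, 0 < (e x).1) {z z' : Torus (k + 1)}
    (h : kleinMap e z = kleinMap e z') : z = z' ∨ KleinRel (k + 1) z z' := by
  simp only [kleinMap, Prod.mk.injEq] at h
  obtain ⟨hpolar, hsnd⟩ := h
  obtain ⟨hfst, hsq⟩ := Complex.eq_of_ofReal_mul_eq (he_pos _) (he_pos _)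
    (by rw [norm_pow, Circle.norm_coe, one_pow]) (by rw [norm_pow, Circle.norm_coe, one_pow]) hpolar
  rcases sq_eq_sq_iff_eq_or_eq_neg.1 hsq with hw | hw
  · left
    rw [hw] at hsnd
    have hv := smul_right_injective V (Circle.coe_ne_zero _) hsnd
    exact Fin.eq_of_init_eq_of_last_eq (he_inj (Prod.ext hfst hv)) (Circle.ext hw)
  · right
    rw [hw, neg_smul, ← smul_neg] at hsnd
    have hv := smul_right_injective V (Circle.coe_ne_zero _) hsnd
    refine Fin.eq_of_init_eq_of_last_eq (he_inj ?_) (Circle.ext ?_)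
    · rw [init_kleinInvolution, he, hfst, hv]
    · rw [kleinInvolution_last, Circle.coe_neg, hw, neg_neg]

variable [TopologicalSpace V] [ContinuousSMul ℂ V]

lemma continuous_kleinMap (he : Continuous e) : Continuous (kleinMap e) := by
  have hx : Continuous fun z : Torus (k + 1) => e (Fin.init z) := he.comp continuous_id.finInit
  have hw : Continuous fun z : Torus (k + 1) => (z (Fin.last k) : ℂ) :=
    continuous_subtype_val.comp (continuous_apply _)
  exact ((Complex.continuous_ofReal.comp (continuous_fst.comp hx)).mul (hw.pow 2)).prodMk
    (hw.smul (continuous_snd.comp hx))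

end KleinMap

instance (n : ℕ) : CompactSpace (Klein n) := inferInstanceAs (CompactSpace (Quot _))

lemma Klein.isEmbedding_lift {n : ℕ} {Y : Type*} [TopologicalSpace Y] [T2Space Y]
    {f : Torus n → Y} (hf : Continuous f) (hrel : ∀ z z', KleinRel n z z' → f z = f z')
    (hinj : ∀ z z', f z = f z' → z = z' ∨ KleinRel n z z') :
    IsEmbedding (Quot.lift f hrel : Klein n → Y) := by
  refine ((continuous_quot_lift hrel hf).isClosedEmbedding ?_).isEmbedding
  rintro ⟨z⟩ ⟨z'⟩ h
  rcases hinj z z' h with rfl | hzz'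
  exacts [rfl, Quot.sound hzz']

lemma Klein.exists_isEmbedding_of_torus {k : ℕ} {V : Type*} [AddCommGroup V] [Module ℂ V]
    [TopologicalSpace V] [ContinuousSMul ℂ V] [T2Space V] {e : Torus k → ℝ × V}
    (he_cont : Continuous e) (he_inj : Injective e) (he_pos : ∀ x, 0 < (e x).1)
    (he : ∀ x, e (fun i => (x i).conj) = ((e x).1, -(e x).2)) :
    ∃ f : Klein (k + 1) → ℂ × V, IsEmbedding f :=
  ⟨_, Klein.isEmbedding_lift (continuous_kleinMap he_cont)
    (fun z _ hzz' => hzz' ▸ (kleinMap_kleinInvolution he z).symm)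
    (fun _ _ h => kleinMap_eq_kleinMap he he_inj he_pos h)⟩

/-- If `n` is odd, then `Kₙ` admits a topological embedding
into `ℝ^{n+1}`. -/
theorem klein_embeds_of_odd (n : ℕ) (hn : Odd n) :
    ∃ f : Klein n → EuclideanSpace ℝ (Fin (n + 1)), Topology.IsEmbedding f := by
  obtain ⟨m, rfl⟩ := hn
  let L : (Fin (2 * m) → ℝ) ≃L[ℝ] (Fin m → ℂ) :=
    .ofFinrankEq (by simp [Module.finrank_pi_fintype, mul_comm])
  let P : (ℂ × (Fin m → ℂ)) ≃L[ℝ] EuclideanSpace ℝ (Fin (2 * m + 1 + 1)) :=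
    .ofFinrankEq (by simp [Module.finrank_pi_fintype]; ring)
  obtain ⟨f, hf⟩ := Klein.exists_isEmbedding_of_torus (e := Prod.map id L ∘ torusTube (2 * m))
    ((continuous_id.prodMap L.continuous).comp (continuous_torusTube _))
    ((injective_id.prodMap L.injective).comp (torusTube_injective _))
    (fun x => (torusTube_fst_mem _ x).1) (fun x => by simp [torusTube_conj])
  exact ⟨P ∘ f, P.toHomeomorph.isEmbedding.comp hf⟩
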